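/- arXiv:1706.07475 — 5 statements merged into one kernel-verified Lean document; each statement's English description precedes it below -/
import Mathlib

section
/- Let 𝒯 be a layering partition of a finite connected graph G and let Δ be the maximum diameter of its clusters. Then for all vertices u and v of G, d_𝒯(u,v) ≤ d_G(u,v) ≤ d_𝒯(u,v) + Δ. -/
open SimpleGraph

variable {V : Type}

/-- `u` and `v` belong to the same cluster of the layering partition of `G`
with start vertex `s`: they are in the same layer (same distance from `s`) and
are connected by a walk using only vertices in the same or upper layers. -/
def layerRel (G : SimpleGraph V) (s u v : V) : Prop :=
  G.dist s u = G.dist s v ∧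
    ∃ w : G.Walk u v, ∀ x ∈ w.support, G.dist s u ≤ G.dist s x

theorem layerRel_refl (G : SimpleGraph V) (s u : V) : layerRel G s u u :=
  ⟨rfl, SimpleGraph.Walk.nil, by simp⟩

theorem layerRel_symm (G : SimpleGraph V) (s : V) : ∀ {u v : V},
    layerRel G s u v → layerRel G s v u := by
  rintro u v ⟨h1, w, hw⟩
  exact ⟨h1.symm, w.reverse, fun x hx => h1 ▸ hw x (by simpa using hx)⟩

theorem layerRel_trans (G : SimpleGraph V) (s : V) : ∀ {u v w : V},
    layerRel G s u v → layerRel G s v w → layerRel G s u w := by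
  rintro u v w ⟨h1, p, hp⟩ ⟨h2, q, hq⟩
  refine ⟨h1.trans h2, p.append q, fun x hx => ?_⟩
  rcases (SimpleGraph.Walk.mem_support_append_iff p q).mp hx with h | h
  · exact hp x h
  · exact h1 ▸ hq x h

/-- The setoid on vertices whose classes are the clusters of the layering partition. -/
def layerSetoid (G : SimpleGraph V) (s : V) : Setoid V :=
  ⟨layerRel G s, ⟨layerRel_refl G s, layerRel_symm G s, layerRel_trans G s⟩⟩

/-- The clusters of the layering partition of `G` with start vertex `s`. -/
def Cluster (G : SimpleGraph V) (s : V) : Type _ := Quotient (layerSetoid G s)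

/-- The cluster containing a vertex. -/
def toCluster (G : SimpleGraph V) (s : V) (v : V) : Cluster G s :=
  Quotient.mk (layerSetoid G s) v

/-- The layering partition 𝒯 seen as a graph on the clusters: two (distinct) clusters are
adjacent iff `G` contains an edge with one endpoint in each.  (This graph is a tree.) -/
def clusterGraph (G : SimpleGraph V) (s : V) : SimpleGraph (Cluster G s) where
  Adj C C' := C ≠ C' ∧ ∃ u v : V, toCluster G s u = C ∧ toCluster G s v = C' ∧ G.Adj u v
  symm := by
    constructor
    rintro C C' ⟨hne, u, v, hu, hv, ha⟩
    exact ⟨hne.symm, v, u, hv, hu, ha.symm⟩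
  loopless := by
    constructor
    rintro C ⟨hne, -⟩
    exact hne rfl

/-- The tree distance `d_𝒯(u,v)` between the clusters containing `u` and `v`. -/
noncomputable def layerDist (G : SimpleGraph V) (s u v : V) : ℕ :=
  (clusterGraph G s).dist (toCluster G s u) (toCluster G s v)

/-- `Δ` is the maximum diameter in `G` of a cluster of the layering partition. -/
def IsMaxClusterDiam (G : SimpleGraph V) (s : V) (Δ : ℕ) : Prop :=
  IsGreatest {d : ℕ | ∃ u v : V, layerRel G s u v ∧ G.dist u v = d} Δ

/-- `D` is an `(r+φ)`-dominating set of `G`: every vertex `v` is within distance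
`r v + φ` of `D`. -/
def IsRPhiDomSet (G : SimpleGraph V) (r : V → ℕ) (φ : ℕ) (D : Set V) : Prop :=
  ∀ v : V, ∃ u ∈ D, G.dist v u ≤ r v + φ

/-- `S` induces a connected subgraph of `G`. -/
def IsConnSet (G : SimpleGraph V) (S : Set V) : Prop := (G.induce S).Connected

/-- `r(C)`, the minimum of `r` over the vertices of the cluster `C`. -/
noncomputable def clusterRadius (G : SimpleGraph V) (s : V) (r : V → ℕ)
    (C : Cluster G s) : ℕ :=
  sInf (r '' {v : V | toCluster G s v = C})

/-- A subtree of the layering partition 𝒯, i.e. a connected set of clusters. -/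
def IsSubtree (G : SimpleGraph V) (s : V) (T' : Set (Cluster G s)) : Prop :=
  ((clusterGraph G s).induce T').Connected

/-- `T'` is an `(r+δ)`-dominating subtree of 𝒯: a subtree such that every cluster `C`
of 𝒯 is within tree-distance `r(C) + δ` of some cluster of `T'`. -/
def IsDomSubtree (G : SimpleGraph V) (s : V) (r : V → ℕ) (δ : ℕ)
    (T' : Set (Cluster G s)) : Prop :=
  IsSubtree G s T' ∧
    ∀ C : Cluster G s, ∃ C' ∈ T',
      (clusterGraph G s).dist C C' ≤ clusterRadius G s r C + δ

/-- `T'` is a minimum `(r+δ)`-dominating subtree of 𝒯 (fewest clusters). -/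
def IsMinDomSubtree (G : SimpleGraph V) (s : V) (r : V → ℕ) (δ : ℕ)
    (T' : Set (Cluster G s)) : Prop :=
  IsDomSubtree G s r δ T' ∧
    ∀ T'' : Set (Cluster G s), IsDomSubtree G s r δ T'' → T'.ncard ≤ T''.ncard

/-- The degree of a cluster `C` inside a set `T'` of clusters. -/
noncomputable def clusterDegree (G : SimpleGraph V) (s : V)
    (T' : Set (Cluster G s)) (C : Cluster G s) : ℕ :=
  {C' : Cluster G s | C' ∈ T' ∧ (clusterGraph G s).Adj C C'}.ncard

/-- `R` is the root of the subtree `T'` of 𝒯 (with the rooting inherited from 𝒯,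
whose root is the cluster `{s}`): the cluster of `T'` closest to the root of 𝒯. -/
def IsRootOf (G : SimpleGraph V) (s : V) (T' : Set (Cluster G s))
    (R : Cluster G s) : Prop :=
  R ∈ T' ∧ ∀ C ∈ T',
    (clusterGraph G s).dist (toCluster G s s) R ≤
      (clusterGraph G s).dist (toCluster G s s) C

/-- `Λ(T')`: the number of leaves of the subtree `T'` rooted at `R`
(`0` if `T'` is a single node). -/
noncomputable def numLeaves (G : SimpleGraph V) (s : V) (T' : Set (Cluster G s))
    (R : Cluster G s) : ℕ :=
  {C : Cluster G s | C ∈ T' ∧ C ≠ R ∧ clusterDegree G s T' C = 1}.ncard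

/-- The eccentricity of a set `S` in `G`: `max_v min_{u ∈ S} d_G(v,u)`. -/
noncomputable def eccSet (G : SimpleGraph V) (S : Set V) : ℕ :=
  sSup (Set.range fun v : V => sInf ((G.dist v) '' S))

/-!
The lower bound holds because a walk in `G` projects onto a walk of the cluster graph that is no
longer. For the upper bound, follow a shortest walk of the cluster graph from `u` to `v`, keeping
track of the lowest layer `i` it visits: `u` and `v` are joined in `G` above layer `i`, and
`d_G(s,u) + d_G(s,v) ≤ d_𝒯(u,v) + 2i`. Then the vertices `x, y` at layer `i` on shortest `s`-`u` and
`s`-`v` paths lie in a common cluster, so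
`d_G(u,v) ≤ (d_G(s,u) - i) + Δ + (d_G(s,v) - i) ≤ d_𝒯(u,v) + Δ`.
-/

namespace SimpleGraph

def ReachableAbove (G : SimpleGraph V) (s : V) (i : ℕ) (u v : V) : Prop :=
  ∃ w : G.Walk u v, ∀ x ∈ w.support, i ≤ G.dist s x

variable {G : SimpleGraph V} {s : V} {i j : ℕ} {u v w : V}

namespace ReachableAbove

lemma le_left (h : ReachableAbove G s i u v) : i ≤ G.dist s u :=
  let ⟨p, hp⟩ := h
  hp u p.start_mem_support

lemma le_right (h : ReachableAbove G s i u v) : i ≤ G.dist s v :=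
  let ⟨p, hp⟩ := h
  hp v p.end_mem_support

lemma of_adj (hadj : G.Adj u v) (hu : i ≤ G.dist s u) (hv : i ≤ G.dist s v) :
    ReachableAbove G s i u v :=
  ⟨hadj.toWalk, by simp [hu, hv]⟩

lemma symm (h : ReachableAbove G s i u v) : ReachableAbove G s i v u :=
  let ⟨p, hp⟩ := h
  ⟨p.reverse, fun x hx => hp x (by simpa using hx)⟩

lemma trans (h₁ : ReachableAbove G s i u v) (h₂ : ReachableAbove G s i v w) :
    ReachableAbove G s i u w :=
  let ⟨p, hp⟩ := h₁
  let ⟨q, hq⟩ := h₂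
  ⟨p.append q, fun x hx => (Walk.mem_support_append_iff p q).mp hx |>.elim (hp x) (hq x)⟩

lemma mono (h : ReachableAbove G s i u v) (hji : j ≤ i) : ReachableAbove G s j u v :=
  let ⟨p, hp⟩ := h
  ⟨p, fun x hx => hji.trans (hp x hx)⟩

end ReachableAbove

lemma layerRel_iff : layerRel G s u v ↔
    G.dist s u = G.dist s v ∧ ReachableAbove G s (G.dist s u) u v :=
  Iff.rfl

lemma layerRel_of_toCluster_eq (h : toCluster G s u = toCluster G s v) : layerRel G s u v :=
  Quotient.exact h

lemma Connected.exists_dist_add_dist_eq_of_le (hconn : G.Connected) (hi : i ≤ G.dist s u) :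
    ∃ x, G.dist s x = i ∧ G.dist s x + G.dist x u = G.dist s u := by
  obtain ⟨p, hp⟩ := hconn.exists_walk_length_eq_dist s u
  have hsx : G.dist s (p.getVert i) ≤ i := by
    simpa [hp, hi] using dist_le (p.take i)
  have hxu : G.dist (p.getVert i) u ≤ G.dist s u - i := by
    simpa [hp] using dist_le (p.drop i)
  have := hconn.dist_triangle (u := s) (v := p.getVert i) (w := u)
  exact ⟨p.getVert i, by omega, by omega⟩

lemma Connected.reachableAbove_of_dist_add_dist_eq (hconn : G.Connected) {x : V}
    (h : G.dist s x + G.dist x u = G.dist s u) : ReachableAbove G s (G.dist s x) x u := by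
  classical
  obtain ⟨p, hp⟩ := hconn.exists_walk_length_eq_dist x u
  refine ⟨p, fun z hz => ?_⟩
  have hzu : G.dist z u ≤ G.dist x u :=
    hp ▸ (dist_le _).trans (p.length_dropUntil_le_length hz)
  have := hconn.dist_triangle (u := s) (v := z) (w := u)
  omega

lemma Connected.layerRel_of_reachableAbove (hconn : G.Connected) {x y : V}
    (huv : ReachableAbove G s i u v)
    (hx : G.dist s x = i) (hxu : G.dist s x + G.dist x u = G.dist s u)
    (hy : G.dist s y = i) (hyv : G.dist s y + G.dist y v = G.dist s v) :
    layerRel G s x y := by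
  subst hx
  have hxu' := hconn.reachableAbove_of_dist_add_dist_eq hxu
  have hyv' := hconn.reachableAbove_of_dist_add_dist_eq hyv
  rw [hy] at hyv'
  exact layerRel_iff.mpr ⟨hy.symm, (hxu'.trans huv).trans hyv'.symm⟩

lemma Connected.dist_add_le_of_reachableAbove (hconn : G.Connected) {Δ : ℕ}
    (hΔ : IsMaxClusterDiam G s Δ) (huv : ReachableAbove G s i u v) :
    G.dist u v + 2 * i ≤ G.dist s u + G.dist s v + Δ := by
  obtain ⟨x, hx, hxu⟩ := hconn.exists_dist_add_dist_eq_of_le huv.le_left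
  obtain ⟨y, hy, hyv⟩ := hconn.exists_dist_add_dist_eq_of_le huv.le_right
  have hxy : G.dist x y ≤ Δ :=
    hΔ.2 ⟨x, y, hconn.layerRel_of_reachableAbove huv hx hxu hy hyv, rfl⟩
  have hux := hconn.dist_triangle (u := u) (v := x) (w := v)
  have hxv := hconn.dist_triangle (u := x) (v := y) (w := v)
  have hxu_comm := G.dist_comm (u := u) (v := x)
  have hyv_comm := G.dist_comm (u := y) (v := v)
  omega

lemma exists_reachableAbove_of_clusterWalk {C C' : Cluster G s}
    (W : (clusterGraph G s).Walk C C') (hu : toCluster G s u = C) (hv : toCluster G s v = C') :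
    ∃ i, ReachableAbove G s i u v ∧ G.dist s u + G.dist s v ≤ W.length + 2 * i := by
  induction W generalizing u with
  | nil =>
    obtain ⟨hd, huv⟩ := layerRel_iff.mp (layerRel_of_toCluster_eq (hu.trans hv.symm))
    exact ⟨G.dist s u, huv, by rw [Walk.length_nil]; omega⟩
  | cons hadj W ih =>
    rw [Walk.length_cons]
    obtain ⟨-, a, b, rfl, rfl, hab⟩ := hadj
    obtain ⟨hua, hua'⟩ := layerRel_iff.mp (layerRel_of_toCluster_eq hu)
    obtain ⟨i, hbv, hlen⟩ := ih rfl hv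
    have hb := hbv.le_left
    have hv' := hbv.le_right
    have hab_layers := hab.diff_dist_adj (u := s)
    refine ⟨min i (G.dist s u), ?_, ?_⟩
    · refine ((hua'.mono (min_le_right _ _)).trans (.of_adj hab ?_ ?_)).trans
        (hbv.mono (min_le_left _ _)) <;> omega
    · omega

lemma exists_clusterWalk_length_le (p : G.Walk u v) :
    ∃ W : (clusterGraph G s).Walk (toCluster G s u) (toCluster G s v), W.length ≤ p.length := by
  induction p with
  | nil => exact ⟨.nil, le_rfl⟩
  | @cons a b c hab p ih =>
    obtain ⟨W, hW⟩ := ih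
    by_cases h : toCluster G s a = toCluster G s b
    · exact ⟨W.copy h.symm rfl, by simp only [Walk.length_copy, Walk.length_cons]; omega⟩
    · exact ⟨.cons ⟨h, a, b, rfl, rfl, hab⟩ W, Nat.succ_le_succ hW⟩

lemma Connected.layerDist_le_dist (hconn : G.Connected) (u v : V) :
    layerDist G s u v ≤ G.dist u v := by
  obtain ⟨p, hp⟩ := hconn.exists_walk_length_eq_dist u v
  obtain ⟨W, hW⟩ := exists_clusterWalk_length_le (s := s) p
  exact (dist_le W).trans (hp ▸ hW)

lemma Connected.dist_le_layerDist_add (hconn : G.Connected) {Δ : ℕ}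
    (hΔ : IsMaxClusterDiam G s Δ) (u v : V) :
    G.dist u v ≤ layerDist G s u v + Δ := by
  obtain ⟨p⟩ := hconn u v
  obtain ⟨W₀, -⟩ := exists_clusterWalk_length_le (s := s) p
  obtain ⟨W, hW⟩ := Reachable.exists_walk_length_eq_dist ⟨W₀⟩
  obtain ⟨i, huv, hlen⟩ := exists_reachableAbove_of_clusterWalk W rfl rfl
  have := hconn.dist_add_le_of_reachableAbove hΔ huv
  rw [layerDist, ← hW]
  omega

end SimpleGraph

theorem layering_partition_dist_bounds_general
    {V : Type} (G : SimpleGraph V) (hconn : G.Connected)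
    (s : V) (Δ : ℕ) (hΔ : IsMaxClusterDiam G s Δ) :
    ∀ u v : V, layerDist G s u v ≤ G.dist u v ∧
      G.dist u v ≤ layerDist G s u v + Δ :=
  fun u v => ⟨hconn.layerDist_le_dist u v, hconn.dist_le_layerDist_add hΔ u v⟩

/-- For a layering partition of a finite connected graph `G` with
maximum cluster diameter `Δ`: for all vertices `u, v`,
`d_𝒯(u,v) ≤ d_G(u,v) ≤ d_𝒯(u,v) + Δ`. -/
theorem layering_partition_dist_bounds
    {V : Type} [Fintype V] (G : SimpleGraph V) (hconn : G.Connected)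
    (s : V) (Δ : ℕ) (hΔ : IsMaxClusterDiam G s Δ) :
    ∀ u v : V, layerDist G s u v ≤ G.dist u v ∧
      G.dist u v ≤ layerDist G s u v + Δ :=
  layering_partition_dist_bounds_general G hconn s Δ hΔ
end

section
/- Let 𝒯 be a layering partition of a finite connected graph G, r : V → ℕ, and let T_r be a minimum r-dominating subtree of 𝒯. If T_r contains more than one cluster, then every connected r-dominating set of G intersects every cluster of T_r. Consequently, T_r has at most |D_r| clusters, where D_r is a minimum connected r-dominating set of G. -/
open SimpleGraph

variable {V : Type}

/-!
The clusters of a layering partition form a tree `𝒯` (adjacent clusters lie in consecutive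
layers and every cluster has a unique neighbour one layer down). In a tree the connected
vertex sets are exactly the nonempty sets containing every path between their points, and
balls are such sets. A connected `r`-dominating set `D` of `G` projects onto an
`r`-dominating subtree `T_D` of `𝒯`. Path-convex sets of a tree have the Helly property, so
if `T_r` meets `T_D` then `T_r ∩ T_D` is again an `r`-dominating subtree and minimality gives
`T_r ⊆ T_D`. If they were disjoint, the cluster of `T_r` closest to `T_D` would lie in every
convex set meeting both, in particular in every ball `B(C, r(C))`, so it alone would be an
`r`-dominating subtree, contradicting `|T_r| > 1`.
-/
namespace SimpleGraph

variable {W W' : Type*} {H : SimpleGraph W}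

theorem induce_connected_iff_exists_walk {S : Set W} :
    (H.induce S).Connected ↔
      S.Nonempty ∧ ∀ u ∈ S, ∀ v ∈ S, ∃ p : H.Walk u v, ∀ x ∈ p.support, x ∈ S := by
  constructor
  · intro h
    obtain ⟨⟨x, hx⟩⟩ := h.nonempty
    refine ⟨⟨x, hx⟩, fun u hu v hv => ?_⟩
    obtain ⟨p⟩ := h.preconnected ⟨u, hu⟩ ⟨v, hv⟩
    have hsupp := Walk.support_map (Embedding.induce S).toHom p
    refine ⟨p.map (Embedding.induce S).toHom, fun y hy => ?_⟩
    have hy' := hsupp ▸ hy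
    obtain ⟨y, -, rfl⟩ := List.mem_map.1 hy'
    exact y.2
  · rintro ⟨⟨x, hx⟩, h⟩
    rw [connected_iff]
    refine ⟨fun ⟨u, hu⟩ ⟨v, hv⟩ => ?_, ⟨⟨x, hx⟩⟩⟩
    obtain ⟨p, hp⟩ := h u hu v hv
    exact ⟨p.induce S hp⟩

theorem Walk.IsPath.append {u v w : W} {p : H.Walk u v} {q : H.Walk v w}
    (hp : p.IsPath) (hq : q.IsPath) (h : ∀ x ∈ p.support, x ∈ q.support → x = v) :
    (p.append q).IsPath := by
  have hq' := hq.support_nodup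
  rw [← Walk.cons_tail_support, List.nodup_cons] at hq'
  rw [Walk.isPath_def, Walk.support_append, List.nodup_append]
  refine ⟨hp.support_nodup, hq'.2, fun x hx y hy hxy => ?_⟩
  subst hxy
  exact hq'.1 (h x hx (List.mem_of_mem_tail hy) ▸ hy)

theorem Walk.exists_walk_of_adj_of_ne {H' : SimpleGraph W'} (f : W → W')
    (hf : ∀ ⦃u v⦄, H.Adj u v → f u ≠ f v → H'.Adj (f u) (f v)) {u v : W} (p : H.Walk u v) :
    ∃ q : H'.Walk (f u) (f v), q.length ≤ p.length ∧ ∀ y ∈ q.support, ∃ x ∈ p.support, f x = y := by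
  induction p with
  | nil => exact ⟨.nil, le_rfl, by simp⟩
  | @cons a b c hab p ih =>
    obtain ⟨q, hlen, hsupp⟩ := ih
    by_cases heq : f a = f b
    · refine ⟨q.copy heq.symm rfl, by simp; omega, fun y hy => ?_⟩
      obtain ⟨x, hx, rfl⟩ := hsupp y (by simpa using hy)
      exact ⟨x, by simp [hx], rfl⟩
    · refine ⟨.cons (hf hab heq) q, by simpa using hlen, fun y hy => ?_⟩
      rcases List.mem_cons.mp hy with rfl | hy
      · exact ⟨a, by simp, rfl⟩
      · obtain ⟨x, hx, rfl⟩ := hsupp y hy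
        exact ⟨x, by simp [hx], rfl⟩

theorem isAcyclic_of_unique_lower_neighbor (ℓ : W → ℕ)
    (hstep : ∀ ⦃u v⦄, H.Adj u v → ℓ u = ℓ v + 1 ∨ ℓ v = ℓ u + 1)
    (hunique : ∀ ⦃u v v'⦄, H.Adj u v → H.Adj u v' → ℓ u = ℓ v + 1 → ℓ u = ℓ v' + 1 → v = v') :
    H.IsAcyclic := by
  classical
  intro u c hc
  obtain ⟨M, hM, hmax⟩ := c.support.toFinset.exists_max_image ℓ ⟨u, by simp⟩
  rw [List.mem_toFinset] at hM
  have hd : (c.rotate M hM).IsCycle := hc.rotate hM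
  have hlower : ∀ x, H.Adj M x → x ∈ (c.rotate M hM).support → ℓ M = ℓ x + 1 := by
    intro x hx hxd
    have := hmax x (by simpa [Walk.mem_support_rotate_iff] using hxd)
    rcases hstep hx with h | h <;> omega
  have hsnd := Walk.adj_snd hd.not_nil
  have hpen := (Walk.adj_penultimate hd.not_nil).symm
  exact hd.snd_ne_penultimate <| hunique hsnd hpen
    (hlower _ hsnd (Walk.getVert_mem_support _ _)) (hlower _ hpen (Walk.getVert_mem_support _ _))

def IsPathConvex (H : SimpleGraph W) (S : Set W) : Prop :=
  ∀ ⦃u v⦄ (p : H.Walk u v), p.IsPath → u ∈ S → v ∈ S → ∀ x ∈ p.support, x ∈ S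

theorem IsPathConvex.inter {S S' : Set W} (hS : H.IsPathConvex S) (hS' : H.IsPathConvex S') :
    H.IsPathConvex (S ∩ S') :=
  fun _ _ p hp hu hv x hx => ⟨hS p hp hu.1 hv.1 x hx, hS' p hp hu.2 hv.2 x hx⟩

theorem IsPathConvex.induce_connected {S : Set W} (hH : H.Connected) (hS : H.IsPathConvex S)
    (hne : S.Nonempty) : (H.induce S).Connected := by
  refine induce_connected_iff_exists_walk.2 ⟨hne, fun u hu v hv => ?_⟩
  obtain ⟨p, hp⟩ := (hH.preconnected u v).exists_isPath
  exact ⟨p, hS p hp hu hv⟩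

namespace IsTree

noncomputable def uniquePath (hT : H.IsTree) (u v : W) : H.Walk u v :=
  (hT.existsUnique_path u v).exists.choose

theorem isPath_uniquePath (hT : H.IsTree) (u v : W) : (hT.uniquePath u v).IsPath :=
  (hT.existsUnique_path u v).exists.choose_spec

section

variable {hT : H.IsTree}

theorem eq_uniquePath {u v : W} {p : H.Walk u v} (hp : p.IsPath) : p = hT.uniquePath u v :=
  (hT.existsUnique_path u v).unique hp (hT.isPath_uniquePath u v)

theorem length_uniquePath (u v : W) : (hT.uniquePath u v).length = H.dist u v := by
  obtain ⟨p, hp, hlen⟩ := hT.connected.exists_path_of_dist u v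
  rw [← eq_uniquePath hp, hlen]

theorem support_uniquePath_subset {u v : W} (p : H.Walk u v) :
    ∀ x ∈ (hT.uniquePath u v).support, x ∈ p.support := by
  classical
  rw [← eq_uniquePath p.bypass_isPath]
  exact fun _ hx => p.support_bypass_subset_support hx

theorem takeUntil_uniquePath [DecidableEq W] {u v m : W} (hm : m ∈ (hT.uniquePath u v).support) :
    (hT.uniquePath u v).takeUntil m hm = hT.uniquePath u m :=
  eq_uniquePath ((hT.isPath_uniquePath u v).takeUntil hm)

theorem dropUntil_uniquePath [DecidableEq W] {u v m : W} (hm : m ∈ (hT.uniquePath u v).support) :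
    (hT.uniquePath u v).dropUntil m hm = hT.uniquePath m v :=
  eq_uniquePath ((hT.isPath_uniquePath u v).dropUntil hm)

theorem mem_support_uniquePath_or_mem {u v m z : W} (hm : m ∈ (hT.uniquePath u v).support)
    (hz : z ∈ (hT.uniquePath u v).support) :
    z ∈ (hT.uniquePath u m).support ∨ z ∈ (hT.uniquePath m v).support := by
  classical
  rwa [← (hT.uniquePath u v).take_spec hm, Walk.mem_support_append_iff, takeUntil_uniquePath,
    dropUntil_uniquePath] at hz

theorem support_uniquePath_subset_of_mem {u v m : W} (hm : m ∈ (hT.uniquePath u v).support) :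
    ∀ x ∈ (hT.uniquePath m v).support, x ∈ (hT.uniquePath u v).support := by
  classical
  rw [← dropUntil_uniquePath hm]
  exact fun _ hx => Walk.support_dropUntil_subset_support _ hm hx

theorem dist_add_dist_of_mem_support {u v m : W} (hm : m ∈ (hT.uniquePath u v).support) :
    H.dist u m + H.dist m v = H.dist u v := by
  classical
  rw [← hT.length_uniquePath, ← hT.length_uniquePath, ← hT.length_uniquePath,
    ← takeUntil_uniquePath hm, ← dropUntil_uniquePath hm, ← Walk.length_append, Walk.take_spec]

theorem dist_le_max_of_mem_support (c : W) {x y z : W} (hz : z ∈ (hT.uniquePath x y).support) :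
    H.dist c z ≤ max (H.dist c x) (H.dist c y) := by
  have hz' := support_uniquePath_subset ((hT.uniquePath x c).append (hT.uniquePath c y)) z hz
  rcases Walk.mem_support_append_iff _ _ |>.1 hz' with h | h
  · have := dist_add_dist_of_mem_support h
    have := H.dist_comm (u := c) (v := z)
    have := H.dist_comm (u := c) (v := x)
    omega
  · have := dist_add_dist_of_mem_support h
    omega

theorem exists_median (a b c : W) :
    ∃ m, m ∈ (hT.uniquePath a b).support ∧ m ∈ (hT.uniquePath b c).support ∧
      m ∈ (hT.uniquePath a c).support := by
  classical
  obtain ⟨m, hm, hmax⟩ := ((hT.uniquePath a b).support.toFinset.filter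
    (· ∈ (hT.uniquePath a c).support)).exists_max_image (H.dist a) ⟨a, by simp⟩
  simp only [Finset.mem_filter, List.mem_toFinset] at hm hmax
  -- the paths from `m` to `b` and to `c` only share `m`, so together they form the path `b – c`
  have hfork : ∀ z ∈ (hT.uniquePath m b).support, z ∈ (hT.uniquePath m c).support → z = m := by
    intro z hzb hzc
    have hab := dist_add_dist_of_mem_support hm.1
    have hmb := dist_add_dist_of_mem_support hzb
    have hzb' := dist_add_dist_of_mem_support (support_uniquePath_subset_of_mem hm.1 z hzb)
    have hle := hmax z ⟨support_uniquePath_subset_of_mem hm.1 z hzb,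
      support_uniquePath_subset_of_mem hm.2 z hzc⟩
    exact ((hT.connected.dist_eq_zero_iff).1 (by omega)).symm
  have hpath := ((hT.isPath_uniquePath m b).reverse).append (hT.isPath_uniquePath m c)
    (fun z hz => hfork z (by simpa using hz))
  refine ⟨m, hm.1, ?_, hm.2⟩
  rw [← eq_uniquePath hpath, Walk.mem_support_append_iff]
  exact Or.inr (Walk.start_mem_support _)

end

theorem isPathConvex_of_induce_connected (hT : H.IsTree) {S : Set W}
    (hS : (H.induce S).Connected) : H.IsPathConvex S := by
  intro u v p hp hu hv x hx
  obtain ⟨w, hw⟩ := (induce_connected_iff_exists_walk.1 hS).2 u hu v hv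
  rw [eq_uniquePath (hT := hT) hp] at hx
  exact hw x (support_uniquePath_subset w x hx)

theorem isPathConvex_setOf_dist_le (hT : H.IsTree) (c : W) (k : ℕ) :
    H.IsPathConvex {x | H.dist c x ≤ k} := by
  intro u v p hp hu hv x hx
  rw [eq_uniquePath (hT := hT) hp] at hx
  exact (dist_le_max_of_mem_support c hx).trans (max_le hu hv)

theorem inter_inter_nonempty_of_isPathConvex (hT : H.IsTree) {S₁ S₂ S₃ : Set W}
    (h₁ : H.IsPathConvex S₁) (h₂ : H.IsPathConvex S₂) (h₃ : H.IsPathConvex S₃)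
    (h₁₂ : (S₁ ∩ S₂).Nonempty) (h₂₃ : (S₂ ∩ S₃).Nonempty) (h₁₃ : (S₁ ∩ S₃).Nonempty) :
    (S₁ ∩ S₂ ∩ S₃).Nonempty := by
  obtain ⟨a, ha₁, ha₂⟩ := h₁₂
  obtain ⟨b, hb₂, hb₃⟩ := h₂₃
  obtain ⟨c, hc₁, hc₃⟩ := h₁₃
  obtain ⟨m, hab, hbc, hac⟩ := hT.exists_median a b c
  have hP := hT.isPath_uniquePath
  exact ⟨m, ⟨h₁ _ (hP a c) ha₁ hc₁ m hac, h₂ _ (hP a b) ha₂ hb₂ m hab⟩, h₃ _ (hP b c) hb₃ hc₃ m hbc⟩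

theorem exists_mem_forall_isPathConvex_of_disjoint (hT : H.IsTree) {S₁ S₂ : Set W}
    (h₁ : H.IsPathConvex S₁) (h₂ : H.IsPathConvex S₂) (hd : Disjoint S₁ S₂)
    (hne₁ : S₁.Nonempty) (hne₂ : S₂.Nonempty) :
    ∃ a ∈ S₁, ∀ B : Set W, H.IsPathConvex B → (B ∩ S₁).Nonempty → (B ∩ S₂).Nonempty → a ∈ B := by
  classical
  have hex : ∃ n, ∃ a ∈ S₁, ∃ b ∈ S₂, H.dist a b = n :=
    ⟨_, _, hne₁.some_mem, _, hne₂.some_mem, rfl⟩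
  obtain ⟨a, ha, b, hb, hab⟩ := Nat.find_spec hex
  have hclosest : ∀ a' ∈ S₁, ∀ b' ∈ S₂, H.dist a b ≤ H.dist a' b' :=
    fun a' ha' b' hb' => hab ▸ Nat.find_min' hex ⟨a', ha', b', hb', rfl⟩
  have hab_only : ∀ z ∈ (hT.uniquePath a b).support, (z ∈ S₁ → z = a) ∧ (z ∈ S₂ → z = b) := by
    intro z hz
    have hsplit := hT.dist_add_dist_of_mem_support hz
    refine ⟨fun hz₁ => ?_, fun hz₂ => ?_⟩
    · have := hclosest z hz₁ b hb
      exact ((hT.connected.dist_eq_zero_iff).1 (by omega)).symm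
    · have := hclosest a ha z hz₂
      exact (hT.connected.dist_eq_zero_iff).1 (by omega)
  have hP := hT.isPath_uniquePath
  refine ⟨a, ha, fun B hB ⟨x, hxB, hx₁⟩ ⟨y, hyB, hy₂⟩ => ?_⟩
  -- `b` lies on the path `a – y`, so the median of `x, a, y`, a point of `S₁` on that path,
  -- must lie on the path `a – b`, where the only point of `S₁` is `a`.
  obtain ⟨b', hb'ab, hb'by, hb'ay⟩ := hT.exists_median a b y
  obtain rfl : b' = b := (hab_only b' hb'ab).2 (h₂ _ (hP b y) hb hy₂ b' hb'by)
  obtain ⟨m, hmxa, hmay, hmxy⟩ := hT.exists_median x a y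
  have hm₁ : m ∈ S₁ := h₁ _ (hP x a) hx₁ ha m hmxa
  rcases hT.mem_support_uniquePath_or_mem hb'ay hmay with hmab | hmby
  · rw [← (hab_only m hmab).1 hm₁]
    exact hB _ (hP x y) hxB hyB m hmxy
  · exact absurd (h₂ _ (hP b' y) hb hy₂ m hmby) (Set.disjoint_left.1 hd hm₁)

end IsTree

end SimpleGraph

section Cluster

variable {G : SimpleGraph V} {s : V}

noncomputable def Cluster.layer (C : Cluster G s) : ℕ :=
  Quotient.lift (s := layerSetoid G s) (G.dist s) (fun _ _ h => h.1) C

@[simp] theorem Cluster.layer_toCluster (v : V) : (toCluster G s v).layer = G.dist s v := rfl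

theorem toCluster_surjective : Function.Surjective (toCluster G s) := Quot.exists_rep

theorem toCluster_eq_of_adj {u v : V} (h : G.Adj u v) (hd : G.dist s u = G.dist s v) :
    toCluster G s u = toCluster G s v :=
  Quotient.sound ⟨hd, Walk.cons h .nil, by simp [hd]⟩

theorem clusterGraph_adj_layer {C C' : Cluster G s} (h : (clusterGraph G s).Adj C C') :
    C.layer = C'.layer + 1 ∨ C'.layer = C.layer + 1 := by
  obtain ⟨hne, u, v, rfl, rfl, huv⟩ := h
  have hne' : G.dist s u ≠ G.dist s v := fun hd => hne (toCluster_eq_of_adj huv hd)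
  have := huv.diff_dist_adj (u := s)
  simp only [Cluster.layer_toCluster]
  omega

theorem clusterGraph_eq_of_adj_of_layer_eq {C B B' : Cluster G s}
    (h : (clusterGraph G s).Adj C B) (h' : (clusterGraph G s).Adj C B')
    (hB : C.layer = B.layer + 1) (hB' : C.layer = B'.layer + 1) : B = B' := by
  obtain ⟨-, u, v, rfl, rfl, huv⟩ := h
  obtain ⟨-, u', v', hu', rfl, huv'⟩ := h'
  obtain ⟨hd, w, hw⟩ : layerRel G s u u' := Quotient.exact hu'.symm
  simp only [Cluster.layer_toCluster] at hB hB'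
  refine Quotient.sound ⟨by omega, Walk.cons huv.symm (w.concat huv'), fun x hx => ?_⟩
  simp only [Walk.support_cons, Walk.support_concat, List.mem_cons, List.mem_append,
    List.not_mem_nil, or_false] at hx
  rcases hx with rfl | hx | rfl
  · exact le_rfl
  · have := hw x hx
    omega
  · omega

theorem exists_clusterGraph_walk {u v : V} (p : G.Walk u v) :
    ∃ q : (clusterGraph G s).Walk (toCluster G s u) (toCluster G s v),
      q.length ≤ p.length ∧ ∀ C ∈ q.support, ∃ x ∈ p.support, toCluster G s x = C :=
  p.exists_walk_of_adj_of_ne (H' := clusterGraph G s) (toCluster G s)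
    fun _ _ h hne => ⟨hne, _, _, rfl, rfl, h⟩

theorem clusterGraph_isTree (hconn : G.Connected) : (clusterGraph G s).IsTree where
  connected := by
    rw [connected_iff]
    refine ⟨fun C C' => ?_, ⟨toCluster G s s⟩⟩
    obtain ⟨u, rfl⟩ := toCluster_surjective C
    obtain ⟨v, rfl⟩ := toCluster_surjective C'
    obtain ⟨q, -⟩ := exists_clusterGraph_walk (s := s) (hconn.preconnected u v).some
    exact ⟨q⟩
  isAcyclic := isAcyclic_of_unique_lower_neighbor Cluster.layer
    (fun _ _ h => clusterGraph_adj_layer h)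
    (fun _ _ _ h h' hB hB' => clusterGraph_eq_of_adj_of_layer_eq h h' hB hB')

theorem dist_toCluster_le (hconn : G.Connected) (u v : V) :
    (clusterGraph G s).dist (toCluster G s u) (toCluster G s v) ≤ G.dist u v := by
  obtain ⟨p, hp⟩ := hconn.exists_walk_length_eq_dist u v
  obtain ⟨q, hq, -⟩ := exists_clusterGraph_walk (s := s) p
  exact (dist_le q).trans (hp ▸ hq)

theorem isSubtree_image {D : Set V} (hD : IsConnSet G D) : IsSubtree G s (toCluster G s '' D) := by
  obtain ⟨hne, hwalk⟩ := induce_connected_iff_exists_walk.1 hD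
  refine induce_connected_iff_exists_walk.2 ⟨hne.image _, ?_⟩
  rintro _ ⟨u, hu, rfl⟩ _ ⟨v, hv, rfl⟩
  obtain ⟨p, hp⟩ := hwalk u hu v hv
  obtain ⟨q, -, hq⟩ := exists_clusterGraph_walk (s := s) p
  refine ⟨q, fun C hC => ?_⟩
  obtain ⟨x, hx, hxC⟩ := hq C hC
  exact ⟨x, hp x hx, hxC⟩

theorem exists_clusterRadius_eq (r : V → ℕ) (C : Cluster G s) :
    ∃ v, toCluster G s v = C ∧ r v = clusterRadius G s r C :=
  have ⟨v, hv⟩ := toCluster_surjective C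
  Nat.sInf_mem (Set.Nonempty.image r (⟨v, hv⟩ : {v | toCluster G s v = C}.Nonempty))

theorem isDomSubtree_image (hconn : G.Connected) {r : V → ℕ} {δ : ℕ} {D : Set V}
    (hD : IsConnSet G D) (hdom : IsRPhiDomSet G r δ D) :
    IsDomSubtree G s r δ (toCluster G s '' D) := by
  refine ⟨isSubtree_image hD, fun C => ?_⟩
  obtain ⟨v, rfl, hv⟩ := exists_clusterRadius_eq r C
  obtain ⟨u, hu, hvu⟩ := hdom v
  exact ⟨_, ⟨u, hu, rfl⟩, hv ▸ (dist_toCluster_le hconn v u).trans hvu⟩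

variable {r : V → ℕ} {δ : ℕ} {T T' : Set (Cluster G s)}

theorem IsDomSubtree.inter (hconn : G.Connected) (hT : IsDomSubtree G s r δ T)
    (hT' : IsDomSubtree G s r δ T') (hne : (T ∩ T').Nonempty) :
    IsDomSubtree G s r δ (T ∩ T') := by
  have htree := clusterGraph_isTree (s := s) hconn
  have hcvx := htree.isPathConvex_of_induce_connected hT.1
  have hcvx' := htree.isPathConvex_of_induce_connected hT'.1
  refine ⟨(hcvx.inter hcvx').induce_connected htree.connected hne, fun C => ?_⟩
  obtain ⟨x, hxT, hx⟩ := hT.2 C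
  obtain ⟨y, hyT', hy⟩ := hT'.2 C
  exact htree.inter_inter_nonempty_of_isPathConvex hcvx hcvx'
    (htree.isPathConvex_setOf_dist_le C _) hne ⟨y, hyT', hy⟩ ⟨x, hxT, hx⟩

theorem IsDomSubtree.exists_singleton_of_disjoint (hconn : G.Connected)
    (hT : IsDomSubtree G s r δ T) (hT' : IsDomSubtree G s r δ T') (hd : Disjoint T T') :
    ∃ C, IsDomSubtree G s r δ {C} := by
  have htree := clusterGraph_isTree (s := s) hconn
  have hcvx := htree.isPathConvex_of_induce_connected hT.1
  have hcvx' := htree.isPathConvex_of_induce_connected hT'.1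
  obtain ⟨x₀, hx₀, -⟩ := hT.2 (toCluster G s s)
  obtain ⟨y₀, hy₀, -⟩ := hT'.2 (toCluster G s s)
  obtain ⟨a, -, hgate⟩ :=
    htree.exists_mem_forall_isPathConvex_of_disjoint hcvx hcvx' hd ⟨x₀, hx₀⟩ ⟨y₀, hy₀⟩
  refine ⟨a, by simp [IsSubtree], fun C => ⟨a, rfl, ?_⟩⟩
  obtain ⟨x, hxT, hx⟩ := hT.2 C
  obtain ⟨y, hyT', hy⟩ := hT'.2 C
  exact hgate _ (htree.isPathConvex_setOf_dist_le C _) ⟨x, hx, hxT⟩ ⟨y, hy, hyT'⟩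

theorem IsMinDomSubtree.subset_of_isDomSubtree (hconn : G.Connected)
    (hmin : IsMinDomSubtree G s r δ T) (hcard : 1 < T.ncard) (hT' : IsDomSubtree G s r δ T') :
    T ⊆ T' := by
  by_cases hne : (T ∩ T').Nonempty
  · have hle := hmin.2 _ (hmin.1.inter hconn hT' hne)
    exact Set.inter_eq_left.1 <| Set.eq_of_subset_of_ncard_le Set.inter_subset_left hle
      (Set.finite_of_ncard_pos (by omega))
  · rw [Set.not_nonempty_iff_eq_empty, ← Set.disjoint_iff_inter_eq_empty] at hne
    obtain ⟨C, hC⟩ := hmin.1.exists_singleton_of_disjoint hconn hT' hne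
    have := hmin.2 _ hC
    rw [Set.ncard_singleton] at this
    omega

end Cluster

/-- If `T_r` is a minimum `r`-dominating subtree of the layering
partition 𝒯 of `G` with more than one cluster, then every connected `r`-dominating
set of `G` intersects every cluster of `T_r`; consequently `|T_r| ≤ |D_r|` for every
minimum connected `r`-dominating set `D_r`. -/
theorem minDomSubtree_card_le_connected_dom
    {V : Type} [Fintype V] (G : SimpleGraph V) (hconn : G.Connected)
    (s : V) (r : V → ℕ) (Tr : Set (Cluster G s))
    (hTr : IsMinDomSubtree G s r 0 Tr) :
    (1 < Tr.ncard →
      ∀ D : Set V, IsConnSet G D → IsRPhiDomSet G r 0 D →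
        ∀ C ∈ Tr, ∃ v ∈ D, toCluster G s v = C) ∧
    (∀ Dr : Set V, IsConnSet G Dr → IsRPhiDomSet G r 0 Dr →
      (∀ D' : Set V, IsConnSet G D' → IsRPhiDomSet G r 0 D' → Dr.ncard ≤ D'.ncard) →
      Tr.ncard ≤ Dr.ncard) := by
  refine ⟨fun hcard D hD hdom => ?_, fun Dr hDr hdom _ => ?_⟩
  · exact hTr.subset_of_isDomSubtree hconn hcard (isDomSubtree_image hconn hD hdom)
  · calc Tr.ncard ≤ (toCluster G s '' Dr).ncard := hTr.2 _ (isDomSubtree_image hconn hDr hdom)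
      _ ≤ Dr.ncard := Set.ncard_image_le Dr.toFinite
end

section
/- Let 𝒯 be a layering partition of a finite connected graph G with maximum cluster diameter Δ, r : V → ℕ, δ a non-negative integer, and let T_δ be a minimum (r+δ)-dominating subtree of 𝒯. Then every vertex set S ⊆ V that intersects all clusters of T_δ is an (r + (δ+Δ))-dominating set of G. -/
open SimpleGraph

variable {V : Type}

/-!
Every vertex `v` has a cluster of `T_δ` within tree distance `r(v) + δ` of its own cluster,
and `S` meets that cluster in some `u`; so it suffices that `d_G(v,u) ≤ d_𝒯(v,u) + Δ`.
Following a walk of length `k` in 𝒯 from the cluster of `v` to that of `u`, one finds a layer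
`j` in which both clusters have the same ancestor cluster, with `d(s,v) + d(s,u) ≤ k + 2j`.
Descending along shortest paths towards `s`, `v` and `u` reach vertices of that ancestor
cluster in layer `j` within distances `d(s,v) - j` and `d(s,u) - j`, and these two vertices
are at distance at most `Δ`.
-/

section LayeringPartition

variable {G : SimpleGraph V} {s : V}

/-- The cluster of `a` is the ancestor in layer `j` of the cluster of `x` in the tree 𝒯. -/
def IsLayerAncestor (G : SimpleGraph V) (s : V) (j : ℕ) (x a : V) : Prop :=
  G.dist s a = j ∧ ∃ w : G.Walk x a, ∀ y ∈ w.support, j ≤ G.dist s y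

lemma isLayerAncestor_of_layerRel {x y : V} (h : layerRel G s x y) :
    IsLayerAncestor G s (G.dist s x) x y :=
  ⟨h.1.symm, h.2⟩

namespace IsLayerAncestor

variable {j j' : ℕ} {x y a b : V}

lemma le_dist (h : IsLayerAncestor G s j x a) : j ≤ G.dist s x := by
  obtain ⟨-, w, hw⟩ := h
  exact hw x w.start_mem_support

lemma trans (hj : j' ≤ j) (ha : IsLayerAncestor G s j x a) (hb : IsLayerAncestor G s j' a b) :
    IsLayerAncestor G s j' x b := by
  obtain ⟨-, wa, hwa⟩ := ha
  obtain ⟨hb, wb, hwb⟩ := hb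
  refine ⟨hb, wa.append wb, fun z hz => ?_⟩
  rcases (Walk.mem_support_append_iff wa wb).mp hz with hz | hz
  exacts [hj.trans (hwa z hz), hwb z hz]

lemma cons (hadj : G.Adj y x) (hy : j ≤ G.dist s y) (ha : IsLayerAncestor G s j x a) :
    IsLayerAncestor G s j y a := by
  obtain ⟨ha, w, hw⟩ := ha
  refine ⟨ha, Walk.cons hadj w, fun z hz => ?_⟩
  rcases List.mem_cons.mp (Walk.support_cons hadj w ▸ hz) with rfl | hz
  exacts [hy, hw z hz]

lemma layerRel (ha : IsLayerAncestor G s j x a) (hb : IsLayerAncestor G s j x b) :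
    _root_.layerRel G s a b := by
  obtain ⟨ha, wa, hwa⟩ := ha
  obtain ⟨hb, wb, hwb⟩ := hb
  refine ⟨ha.trans hb.symm, wa.reverse.append wb, fun z hz => ha ▸ ?_⟩
  rcases (Walk.mem_support_append_iff _ _).mp hz with hz | hz
  exacts [hwa z (by simpa using hz), hwb z hz]

end IsLayerAncestor

lemma SimpleGraph.Connected.exists_adj_dist_add_one_eq (hconn : G.Connected) {x : V}
    (hx : G.dist s x ≠ 0) : ∃ y, G.Adj x y ∧ G.dist s y + 1 = G.dist s x := by
  obtain ⟨p, hp⟩ := hconn.exists_walk_length_eq_dist x s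
  cases p with
  | nil => simp at hx
  | @cons _ y _ hadj q =>
    have hq : G.dist s y ≤ q.length := dist_comm (G := G) ▸ dist_le q
    have hy := hadj.diff_dist_adj (u := s)
    rw [Walk.length_cons, dist_comm] at hp
    exact ⟨y, hadj, by omega⟩

lemma exists_isLayerAncestor (hconn : G.Connected) {j : ℕ} {x : V} (hj : j ≤ G.dist s x) :
    ∃ a, IsLayerAncestor G s j x a ∧ G.dist x a + j ≤ G.dist s x := by
  obtain ⟨k, hk⟩ := Nat.exists_eq_add_of_le hj
  induction k generalizing x with
  | zero =>
    subst hk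
    exact ⟨x, isLayerAncestor_of_layerRel (layerRel_refl G s x), by simp⟩
  | succ k ih =>
    obtain ⟨y, hxy, hy⟩ := hconn.exists_adj_dist_add_one_eq (s := s) (x := x) (by omega)
    obtain ⟨a, ha, hya⟩ := ih (x := y) (by omega) (by omega)
    have hxa : G.dist x a ≤ G.dist x y + G.dist y a := hconn.dist_triangle
    rw [dist_eq_one_iff_adj.mpr hxy] at hxa
    exact ⟨a, ha.cons hxy (by omega), by omega⟩

lemma toCluster_eq_of_adj_of_dist_eq {u v : V} (huv : G.Adj u v)
    (h : G.dist s u = G.dist s v) : toCluster G s u = toCluster G s v := by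
  refine Quotient.sound ⟨h, Walk.cons huv Walk.nil, fun z hz => ?_⟩
  simp only [Walk.support_cons, Walk.support_nil, List.mem_cons,
    List.not_mem_nil, or_false] at hz
  rcases hz with rfl | rfl
  exacts [le_rfl, h.le]

lemma clusterGraph_connected (hconn : G.Connected) : (clusterGraph G s).Connected := by
  have hadj : ∀ x y, G.Adj x y →
      Relation.ReflTransGen (clusterGraph G s).Adj (toCluster G s x) (toCluster G s y) := by
    intro x y hxy
    by_cases h : toCluster G s x = toCluster G s y
    · exact h ▸ Relation.ReflTransGen.refl
    · exact Relation.ReflTransGen.single ⟨h, x, y, rfl, rfl, hxy⟩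
  refine (connected_iff_exists_forall_reachable _).mpr
    ⟨toCluster G s s, fun C => Quotient.inductionOn C fun x => ?_⟩
  exact (reachable_iff_reflTransGen _ _).mpr
    (Relation.ReflTransGen.lift' _ hadj _ _ ((reachable_iff_reflTransGen s x).mp (hconn s x)))

/-- By induction along the walk: when the walk enters the layer of the current common ancestor
from the layer just below it (closer to `s`), that ancestor is replaced by its parent. -/
lemma exists_common_isLayerAncestor (hconn : G.Connected) {C C' : Cluster G s}
    (w : (clusterGraph G s).Walk C C') {x y : V} (hx : toCluster G s x = C)
    (hy : toCluster G s y = C') :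
    ∃ j a, IsLayerAncestor G s j x a ∧ IsLayerAncestor G s j y a ∧
      G.dist s x + G.dist s y ≤ w.length + 2 * j := by
  induction w generalizing x with
  | nil =>
    have hxy : layerRel G s x y := Quotient.exact (hx.trans hy.symm)
    refine ⟨G.dist s x, y, isLayerAncestor_of_layerRel hxy, ?_, by rw [hxy.1]; omega⟩
    exact hxy.1 ▸ isLayerAncestor_of_layerRel (layerRel_refl G s y)
  | @cons C C₁ C' hadj w ih =>
    rw [Walk.length_cons]
    obtain ⟨hne, u, v, hu, hv, huv⟩ := hadj
    obtain ⟨j, a, hva, hya, hlen⟩ := ih hv hy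
    have hxu : layerRel G s x u := Quotient.exact (hx.trans hu.symm)
    have hxu' := isLayerAncestor_of_layerRel hxu
    have hdxu : G.dist s x = G.dist s u := hxu.1
    have huv_ne : G.dist s u ≠ G.dist s v := fun h =>
      hne (hu ▸ hv ▸ toCluster_eq_of_adj_of_dist_eq huv h)
    have huv_dist := huv.diff_dist_adj (u := s)
    have hjv := hva.le_dist
    by_cases hj : j ≤ G.dist s u
    · exact ⟨j, a, hxu'.trans (hdxu ▸ hj) (hva.cons huv hj), hya, by omega⟩
    · obtain ⟨b, hab, -⟩ := exists_isLayerAncestor hconn (x := a) (j := G.dist s u)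
        (by rw [hva.1]; omega)
      have hub : IsLayerAncestor G s (G.dist s u) u b :=
        (hva.trans (by omega) hab).cons huv le_rfl
      exact ⟨G.dist s u, b, hxu'.trans hdxu.ge hub, hya.trans (by omega) hab, by omega⟩

lemma dist_add_two_mul_le_of_isLayerAncestor (hconn : G.Connected) {Δ j : ℕ}
    (hΔ : ∀ u v, layerRel G s u v → G.dist u v ≤ Δ) {x y a : V}
    (hxa : IsLayerAncestor G s j x a) (hya : IsLayerAncestor G s j y a) :
    G.dist x y + 2 * j ≤ G.dist s x + G.dist s y + Δ := by
  obtain ⟨a', hxa', hx⟩ := exists_isLayerAncestor hconn hxa.le_dist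
  obtain ⟨b', hyb', hy⟩ := exists_isLayerAncestor hconn hya.le_dist
  have hab : G.dist a' b' ≤ Δ :=
    hΔ a' b' (layerRel_trans G s (hxa'.layerRel hxa) (hya.layerRel hyb'))
  have h₁ : G.dist x y ≤ G.dist x a' + G.dist a' y := hconn.dist_triangle
  have h₂ : G.dist a' y ≤ G.dist a' b' + G.dist b' y := hconn.dist_triangle
  have h₃ : G.dist b' y = G.dist y b' := dist_comm
  omega

theorem dist_le_layerDist_add (hconn : G.Connected) {Δ : ℕ}
    (hΔ : ∀ u v, layerRel G s u v → G.dist u v ≤ Δ) (x y : V) :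
    G.dist x y ≤ layerDist G s x y + Δ := by
  obtain ⟨w, hw⟩ := (clusterGraph_connected hconn).exists_walk_length_eq_dist
    (toCluster G s x) (toCluster G s y)
  obtain ⟨j, a, hxa, hya, hlen⟩ := exists_common_isLayerAncestor hconn w rfl rfl
  have := dist_add_two_mul_le_of_isLayerAncestor hconn hΔ hxa hya
  unfold layerDist
  omega

end LayeringPartition

theorem transversal_of_Tdelta_is_dominating_general
    {V : Type} (G : SimpleGraph V) (hconn : G.Connected)
    (s : V) (Δ : ℕ) (hΔ : IsMaxClusterDiam G s Δ)
    (r : V → ℕ) (δ : ℕ) (Tδ : Set (Cluster G s))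
    (hTδ : IsMinDomSubtree G s r δ Tδ)
    (S : Set V) (hS : ∀ C ∈ Tδ, ∃ v ∈ S, toCluster G s v = C) :
    IsRPhiDomSet G r (δ + Δ) S := by
  intro v
  obtain ⟨C, hCT, hvC⟩ := hTδ.1.2 (toCluster G s v)
  obtain ⟨u, huS, rfl⟩ := hS C hCT
  have hrv : clusterRadius G s r (toCluster G s v) ≤ r v := Nat.sInf_le ⟨v, rfl, rfl⟩
  refine ⟨u, huS, ?_⟩
  calc G.dist v u ≤ layerDist G s v u + Δ :=
        dist_le_layerDist_add hconn (fun a b hab => hΔ.2 ⟨a, b, hab, rfl⟩) v u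
    _ ≤ r v + (δ + Δ) := by unfold layerDist; omega

/-- If `T_δ` is a minimum `(r+δ)`-dominating subtree of the layering
partition 𝒯 (maximum cluster diameter `Δ`), then any vertex set `S` intersecting all
clusters of `T_δ` is an `(r + (δ+Δ))`-dominating set of `G`. -/
theorem transversal_of_Tdelta_is_dominating
    {V : Type} [Fintype V] (G : SimpleGraph V) (hconn : G.Connected)
    (s : V) (Δ : ℕ) (hΔ : IsMaxClusterDiam G s Δ)
    (r : V → ℕ) (δ : ℕ) (Tδ : Set (Cluster G s))
    (hTδ : IsMinDomSubtree G s r δ Tδ)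
    (S : Set V) (hS : ∀ C ∈ Tδ, ∃ v ∈ S, toCluster G s v = C) :
    IsRPhiDomSet G r (δ + Δ) S :=
  transversal_of_Tdelta_is_dominating_general G hconn s Δ hΔ r δ Tδ hTδ S hS
end

section
/- Let T_δ be a subtree (with at least two clusters) of a layering partition 𝒯 of a finite connected graph G, rooted consistently with 𝒯. Then there exists a family 𝒫 = {P_1, …, P_λ} of paths of G, where λ equals the number of leaves of T_δ distinct from its root, such that every cluster C of T_δ is intersected by exactly one path P_i of 𝒫, and C and that path share exactly one vertex (|C ∩ P_i| = 1). In particular, the paths are vertex-disjoint and the total number of vertices on all paths equals the number of clusters of T_δ. -/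
open SimpleGraph

variable {V : Type}

/-! Every non-root cluster of the subtree has its parent cluster (the neighbouring cluster one
layer closer to `s`) in the subtree, and its degree there is one plus its number of children
there. So the subtree is a rooted tree given by a parent map, whose leaves other than the root are
exactly its clusters of degree one. Removing a leaf of maximal layer and inducting splits such a
tree into vertical chains, one per leaf. A vertical chain of clusters lifts to a path of `G`, since
every vertex of a non-root cluster has a neighbour in the parent cluster; that path meets each
cluster of the chain exactly once because it descends one layer per step. -/

section ListPartition

variable {β γ : Type*} {S : Set β} {k : ℕ}

structure IsListPartition (S : Set β) (c : Fin k → List β) : Prop where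
  nodup : ∀ i, (c i).Nodup
  subset : ∀ i, ∀ a ∈ c i, a ∈ S
  existsUnique_mem : ∀ x ∈ S, ∃! i, x ∈ c i

theorem IsListPartition.sum_length_eq_ncard {c : Fin k → List β} (h : IsListPartition S c) :
    ∑ i, (c i).length = S.ncard := by
  classical
  have hS : S = ↑(Finset.univ.biUnion fun i => (c i).toFinset) := by
    ext x
    simp only [Finset.coe_biUnion, Finset.coe_univ, Set.mem_univ, List.coe_toFinset,
      Set.iUnion_true, Set.mem_iUnion, Set.mem_ofPred_eq]
    exact ⟨fun hx => (h.existsUnique_mem x hx).exists, fun ⟨i, hi⟩ => h.subset i x hi⟩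
  rw [hS, Set.ncard_coe_finset, Finset.card_biUnion]
  · simp only [List.toFinset_card_of_nodup (h.nodup _)]
  · intro i _ j _ hij
    rw [Function.onFun, List.disjoint_toFinset_iff_disjoint]
    intro x hi hj
    exact hij ((h.existsUnique_mem x (h.subset i x hi)).unique hi hj)

variable {f : γ → β} {l : Fin k → List γ}

theorem IsListPartition.nodup_of_map (h : IsListPartition S fun i => (l i).map f) (i : Fin k) :
    (l i).Nodup :=
  (h.nodup i).of_map f

theorem IsListPartition.existsUnique_exists_mem_map (h : IsListPartition S fun i => (l i).map f) :
    ∀ x ∈ S, ∃! i, ∃ b ∈ l i, f b = x := by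
  simpa only [List.mem_map] using h.existsUnique_mem

theorem IsListPartition.ncard_inter_fiber_eq_one (h : IsListPartition S fun i => (l i).map f)
    {i : Fin k} {x : β} (hx : ∃ b ∈ l i, f b = x) :
    ({b | b ∈ l i} ∩ {b | f b = x}).ncard = 1 := by
  obtain ⟨b, hb, rfl⟩ := hx
  refine Set.ncard_eq_one.mpr ⟨b, Set.eq_singleton_iff_unique_mem.mpr ⟨⟨hb, rfl⟩, ?_⟩⟩
  rintro b' ⟨hb', hfb'⟩
  exact List.inj_on_of_nodup_map (h.nodup i) hb' hb hfb'

theorem IsListPartition.disjoint_of_map (h : IsListPartition S fun i => (l i).map f) {i j : Fin k}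
    (hij : i ≠ j) :
    Disjoint {b | b ∈ l i} {b | b ∈ l j} := by
  refine Set.disjoint_left.mpr fun b hbi hbj => hij ?_
  have hfi : f b ∈ (l i).map f := List.mem_map_of_mem hbi
  exact (h.existsUnique_mem _ (h.subset i _ hfi)).unique hfi (List.mem_map_of_mem hbj)

theorem IsListPartition.sum_ncard_eq_of_map (h : IsListPartition S fun i => (l i).map f) :
    ∑ i, {b | b ∈ l i}.ncard = S.ncard := by
  classical
  rw [← h.sum_length_eq_ncard]
  refine Finset.sum_congr rfl fun i _ => ?_
  rw [← List.coe_toFinset, Set.ncard_coe_finset, List.toFinset_card_of_nodup (h.nodup_of_map i),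
    List.length_map]

end ListPartition

section ChainDecomposition

variable {α : Type*} (par : α → α) (R : α)

/-- The leaves of the tree on `S` with root `R` and parent map `par`; this includes `R` exactly
when `S = {R}`. -/
def childless (S : Set α) : Set α := {x | x ∈ S ∧ ∀ y ∈ S, y ≠ R → par y ≠ x}

structure IsChainDecomposition (S : Set α) {k : ℕ} (c : Fin k → List α) : Prop
    extends IsListPartition S c where
  ne_nil : ∀ i, c i ≠ []
  isChain : ∀ i, (c i).IsChain fun a b => a ≠ R ∧ par a = b

variable {par R} {S : Set α} {k : ℕ} {c : Fin k → List α}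

theorem childless_insert {x : α} (hxS : x ∉ S) (hxR : x ≠ R) (hpx : par x ∈ S)
    (hx : ∀ y ∈ S, y ≠ R → par y ≠ x) :
    childless par R (insert x S) = insert x (childless par R S \ {par x}) := by
  ext z
  simp only [childless, Set.mem_insert_iff, Set.mem_ofPred_eq, Set.mem_sdiff,
    Set.mem_singleton_iff, forall_eq_or_imp]
  grind

theorem List.IsChain.exists_rel_of_mem_tail {r : α → α → Prop} :
    ∀ {l : List α}, l.IsChain r → ∀ {b}, b ∈ l.tail → ∃ a ∈ l, r a b
  | a :: b' :: t, h, b, hb => by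
    rw [List.isChain_cons_cons] at h
    rcases List.mem_cons.mp hb with rfl | hb
    · exact ⟨a, List.mem_cons_self, h.1⟩
    · obtain ⟨a', ha', hr⟩ := h.2.exists_rel_of_mem_tail hb
      exact ⟨a', List.mem_cons_of_mem _ ha', hr⟩

theorem IsChainDecomposition.head?_eq_of_mem_childless (h : IsChainDecomposition par R S c)
    {p : α} (hp : p ∈ childless par R S) {i : Fin k} (hpi : p ∈ c i) :
    (c i).head? = some p := by
  obtain ⟨a, t, hc⟩ := List.exists_cons_of_ne_nil (h.ne_nil i)
  rw [hc] at hpi ⊢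
  rcases List.mem_cons.mp hpi with rfl | hpt
  · rfl
  · obtain ⟨y, hy, hyR, rfl⟩ := (h.isChain i).exists_rel_of_mem_tail (by rwa [hc])
    exact absurd rfl (hp.2 y (h.subset i y hy) hyR)

theorem IsChainDecomposition.cons_singleton (h : IsChainDecomposition par R S c) {x : α}
    (hx : x ∉ S) : IsChainDecomposition par R (insert x S) (Fin.cons [x] c) := by
  have hxc : ∀ i, x ∉ c i := fun i hxi => hx (h.subset i x hxi)
  refine ⟨⟨?_, ?_, ?_⟩, ?_, ?_⟩
  · exact Fin.cases (by simp) h.nodup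
  · refine Fin.cases (by simp) fun i a ha => Set.mem_insert_of_mem x (h.subset i a ha)
  · rintro z (rfl | hz)
    · refine ⟨0, by simp, Fin.cases (fun _ => rfl) fun i hi => absurd hi (hxc i)⟩
    · obtain ⟨i, hi, huniq⟩ := h.existsUnique_mem z hz
      refine ⟨i.succ, hi, Fin.cases (fun h0 => ?_) fun j hj => congrArg Fin.succ (huniq j hj)⟩
      simp only [Fin.cons_zero, List.mem_singleton] at h0
      exact absurd (h0 ▸ hz) hx
  · exact Fin.cases (by simp) h.ne_nil
  · exact Fin.cases (by simp) h.isChain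

theorem IsChainDecomposition.update_cons [DecidableEq α] (h : IsChainDecomposition par R S c)
    {x : α} (hx : x ∉ S) (hxR : x ≠ R) {i₀ : Fin k} (hhead : (c i₀).head? = some (par x)) :
    IsChainDecomposition par R (insert x S) (Function.update c i₀ (x :: c i₀)) := by
  have hxc : ∀ i, x ∉ c i := fun i hxi => hx (h.subset i x hxi)
  have hmem : ∀ z i,
      z ∈ Function.update c i₀ (x :: c i₀) i ↔ (i = i₀ ∧ z = x) ∨ z ∈ c i := by
    intro z i
    rcases eq_or_ne i i₀ with rfl | hi
    · simp
    · simp [hi]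
  refine ⟨⟨fun i => ?_, fun i a ha => ?_, ?_⟩, fun i => ?_, fun i => ?_⟩
  · rcases eq_or_ne i i₀ with rfl | hi
    · simpa using ⟨hxc i, h.nodup i⟩
    · simpa [hi] using h.nodup i
  · rcases (hmem a i).mp ha with ⟨-, rfl⟩ | ha
    · exact Set.mem_insert a S
    · exact Set.mem_insert_of_mem x (h.subset i a ha)
  · rintro z (rfl | hz)
    · refine ⟨i₀, (hmem _ _).mpr (Or.inl ⟨rfl, rfl⟩), fun j hj => ?_⟩
      rcases (hmem _ _).mp hj with ⟨rfl, -⟩ | hj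
      · rfl
      · exact absurd hj (hxc j)
    · have hzx : z ≠ x := fun hzx => hx (hzx ▸ hz)
      obtain ⟨i, hi, huniq⟩ := h.existsUnique_mem z hz
      exact ⟨i, (hmem _ _).mpr (Or.inr hi), fun j hj => huniq j (((hmem _ _).mp hj).resolve_left
        fun hj' => hzx hj'.2)⟩
  · rcases eq_or_ne i i₀ with rfl | hi
    · simp
    · simpa [hi] using h.ne_nil i
  · rcases eq_or_ne i i₀ with rfl | hi
    · simpa [List.isChain_cons, hhead, hxR] using h.isChain i
    · simpa [hi] using h.isChain i

variable (par R)

theorem exists_isChainDecomposition (ℓ : α → ℕ) {S : Set α} (hS : S.Finite) (hR : R ∈ S)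
    (hpar : ∀ x ∈ S, x ≠ R → par x ∈ S ∧ ℓ (par x) < ℓ x) :
    ∃ (k : ℕ) (c : Fin k → List α),
      k = (childless par R S).ncard ∧ IsChainDecomposition par R S c := by
  classical
  obtain ⟨n, hn⟩ : ∃ n, S.ncard = n := ⟨_, rfl⟩
  induction n generalizing S with
  | zero => exact absurd hn (Set.ncard_pos hS |>.mpr ⟨R, hR⟩).ne'
  | succ n ih =>
    rcases (S \ {R}).eq_empty_or_nonempty with hSR | hSR
    · have hS : S = {R} := by
        rw [Set.sdiff_eq_empty] at hSR
        exact Set.Subset.antisymm hSR (Set.singleton_subset_iff.mpr hR)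
      subst hS
      refine ⟨1, fun _ => [R], ?_, ⟨⟨?_, ?_, ?_⟩, ?_, ?_⟩⟩ <;> simp [childless]
    -- the removed vertex `x` has maximal rank, so it is a leaf
    obtain ⟨x, ⟨hxS, hxR⟩, hxmax⟩ := Set.exists_max_image _ ℓ hS.sdiff hSR
    have hx : ∀ y ∈ S \ {x}, y ≠ R → par y ≠ x := fun y hy hyR hyx => by
      have := hxmax y ⟨hy.1, hyR⟩
      have := hyx ▸ (hpar y hy.1 hyR).2
      omega
    have hpx : par x ∈ S \ {x} := by
      refine ⟨(hpar x hxS hxR).1, fun h => ?_⟩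
      have := (hpar x hxS hxR).2
      rw [Set.mem_singleton_iff.mp h] at this
      omega
    have hRS' : R ∈ S \ {x} := ⟨hR, fun h => hxR (Set.mem_singleton_iff.mp h).symm⟩
    obtain ⟨k, c, hk, hc⟩ := ih hS.sdiff hRS'
      (fun y hy hyR => ⟨⟨(hpar y hy.1 hyR).1, hx y hy hyR⟩, (hpar y hy.1 hyR).2⟩)
      (by rw [Set.ncard_sdiff_singleton_of_mem hxS, hn]; rfl)
    have hxS' : x ∉ S \ {x} := fun h => h.2 rfl
    rw [← Set.insert_eq_of_mem hxS, ← Set.insert_sdiff_singleton,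
      childless_insert hxS' hxR hpx hx]
    have hfin : (childless par R (S \ {x}) \ {par x}).Finite :=
      hS.subset fun z hz => hz.1.1.1
    rw [Set.ncard_insert_of_notMem (fun h => hxS' h.1.1) hfin]
    by_cases hp : par x ∈ childless par R (S \ {x})
    · obtain ⟨i₀, hi₀, -⟩ := hc.existsUnique_mem _ hpx
      refine ⟨k, _, ?_, hc.update_cons hxS' hxR (hc.head?_eq_of_mem_childless hp hi₀)⟩
      rw [Set.ncard_sdiff_singleton_add_one hp (hS.subset fun z hz => hz.1.1), hk]
    · exact ⟨k + 1, _, by rw [Set.sdiff_singleton_eq_self hp, hk], hc.cons_singleton hxS'⟩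

theorem root_notMem_childless (ℓ : α → ℕ) {S : Set α} (hS : S.Finite)
    (hpar : ∀ x ∈ S, x ≠ R → par x ∈ S ∧ ℓ (par x) < ℓ x)
    (hne : (S \ {R}).Nonempty) : R ∉ childless par R S := by
  obtain ⟨y, ⟨hyS, hyR⟩, hmin⟩ := Set.exists_min_image _ ℓ hS.sdiff hne
  have hpy : par y = R := by
    by_contra hpy
    have := hmin (par y) ⟨(hpar y hyS hyR).1, hpy⟩
    have := (hpar y hyS hyR).2
    omega
  exact fun hR => hR.2 y hyS hyR hpy

end ChainDecomposition

noncomputable def clusterLayer (G : SimpleGraph V) (s : V) : Cluster G s → ℕ :=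
  Quotient.lift (G.dist s) fun _ _ h => h.1

open Classical in
/-- The parent of `C` in 𝒯 (`C` itself on layer `0`). -/
noncomputable def parentCluster (G : SimpleGraph V) (s : V) (C : Cluster G s) : Cluster G s :=
  if h : ∃ u, G.Adj (Quotient.out C) u ∧ G.dist s u + 1 = G.dist s (Quotient.out C) then
    toCluster G s h.choose
  else C

section LayeringPartition

variable {G : SimpleGraph V} {s : V}

@[simp]
theorem clusterLayer_toCluster (v : V) : clusterLayer G s (toCluster G s v) = G.dist s v := rfl

theorem toCluster_eq_iff {u v : V} : toCluster G s u = toCluster G s v ↔ layerRel G s u v :=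
  Quotient.eq

theorem exists_toCluster_eq (C : Cluster G s) : ∃ v, toCluster G s v = C :=
  ⟨_, Quotient.out_eq C⟩

theorem exists_adj_dist_add_one_eq {v : V} (h : G.dist s v ≠ 0) :
    ∃ u, G.Adj v u ∧ G.dist s u + 1 = G.dist s v := by
  obtain ⟨p, hp⟩ := exists_walk_of_dist_ne_zero h
  have hnil : ¬p.Nil := fun hn => h (by rw [← hp, Walk.length_eq_zero_iff.mpr hn])
  have hadj := p.adj_penultimate hnil
  refine ⟨p.penultimate, hadj.symm, le_antisymm ?_ ?_⟩
  · have := G.dist_le p.dropLast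
    rw [p.length_dropLast] at this
    omega
  · rcases hadj.diff_dist_adj (u := s) with h' | h' | h' <;> omega

theorem layerRel_of_adj_of_adj {v v' u u' : V} (hv : layerRel G s v v') (hu : G.Adj v u)
    (hu' : G.Adj v' u') (hdu : G.dist s u + 1 = G.dist s v)
    (hdu' : G.dist s u' + 1 = G.dist s v') : layerRel G s u u' := by
  obtain ⟨hd, w, hw⟩ := hv
  refine ⟨by omega, Walk.cons hu.symm (w.concat hu'), fun x hx => ?_⟩
  simp only [Walk.support_cons, Walk.support_concat, List.mem_cons, List.mem_append,
    List.mem_nil_iff, or_false] at hx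
  rcases hx with rfl | hx | rfl
  · exact le_rfl
  · have := hw x hx
    omega
  · omega

theorem toCluster_eq_parentCluster {v u : V} (hu : G.Adj v u)
    (hd : G.dist s u + 1 = G.dist s v) :
    toCluster G s u = parentCluster G s (toCluster G s v) := by
  have hv : layerRel G s v (Quotient.out (toCluster G s v)) :=
    toCluster_eq_iff.mp (Quotient.out_eq _).symm
  have h := exists_adj_dist_add_one_eq (s := s) (v := Quotient.out (toCluster G s v))
    (by rw [← hv.1]; omega)
  rw [parentCluster, dif_pos h]
  exact toCluster_eq_iff.mpr (layerRel_of_adj_of_adj hv hu h.choose_spec.1 hd h.choose_spec.2)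

theorem exists_adj_toCluster_eq_parentCluster {v : V} (h : G.dist s v ≠ 0) :
    ∃ u, G.Adj v u ∧ G.dist s u + 1 = G.dist s v ∧
      toCluster G s u = parentCluster G s (toCluster G s v) :=
  let ⟨u, hu, hd⟩ := exists_adj_dist_add_one_eq h
  ⟨u, hu, hd, toCluster_eq_parentCluster hu hd⟩

theorem clusterLayer_parentCluster {C : Cluster G s} (h : clusterLayer G s C ≠ 0) :
    clusterLayer G s (parentCluster G s C) + 1 = clusterLayer G s C := by
  obtain ⟨v, rfl⟩ := exists_toCluster_eq C
  obtain ⟨u, -, hd, hu⟩ := exists_adj_toCluster_eq_parentCluster h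
  rwa [← hu]

theorem clusterGraph_adj_parentCluster {C : Cluster G s} (h : clusterLayer G s C ≠ 0) :
    (clusterGraph G s).Adj C (parentCluster G s C) := by
  obtain ⟨v, rfl⟩ := exists_toCluster_eq C
  obtain ⟨u, hadj, -, hu⟩ := exists_adj_toCluster_eq_parentCluster h
  refine ⟨fun heq => ?_, v, u, rfl, hu, hadj⟩
  have := clusterLayer_parentCluster h
  rw [← heq] at this
  omega

theorem clusterLayer_eq_add_one_of_adj {C D : Cluster G s} (h : (clusterGraph G s).Adj C D) :
    clusterLayer G s D + 1 = clusterLayer G s C ∨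
      clusterLayer G s C + 1 = clusterLayer G s D := by
  obtain ⟨hne, u, v, rfl, rfl, huv⟩ := h
  have hne' : G.dist s u ≠ G.dist s v := fun hd =>
    hne (toCluster_eq_iff.mpr ⟨hd, huv.toWalk, by simp [hd]⟩)
  simp only [clusterLayer_toCluster]
  rcases huv.diff_dist_adj (u := s) with h | h | h <;> omega

theorem eq_parentCluster_of_adj {C D : Cluster G s} (h : (clusterGraph G s).Adj C D)
    (hl : clusterLayer G s D + 1 = clusterLayer G s C) : D = parentCluster G s C := by
  obtain ⟨-, u, v, rfl, rfl, huv⟩ := h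
  exact toCluster_eq_parentCluster huv hl

theorem clusterLayer_le_add_length {C D : Cluster G s} (p : (clusterGraph G s).Walk C D) :
    clusterLayer G s D ≤ clusterLayer G s C + p.length := by
  induction p with
  | nil => simp
  | cons h _ ih =>
    have := clusterLayer_eq_add_one_of_adj h
    rw [Walk.length_cons]
    omega

theorem parentCluster_mem_support {C D : Cluster G s} (p : (clusterGraph G s).Walk C D)
    (hne : C ≠ D) (hle : clusterLayer G s D ≤ clusterLayer G s C) :
    parentCluster G s C ∈ p.support := by
  classical
  induction hn : p.length using Nat.strong_induction_on generalizing C with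
  | _ n ih =>
    cases p with
    | nil => exact absurd rfl hne
    | @cons _ C₁ _ hadj q =>
      rw [Walk.support_cons]
      apply List.mem_cons_of_mem
      rcases clusterLayer_eq_add_one_of_adj hadj with hdown | hup
      · exact eq_parentCluster_of_adj hadj hdown ▸ q.start_mem_support
      -- `C` is the parent of `C₁`, so `q` comes back to `C`; recurse on the rest of `q`
      · have hC₁D : C₁ ≠ D := by rintro rfl; omega
        have hq : C ∈ q.support := by
          rw [eq_parentCluster_of_adj hadj.symm hup]
          exact ih _ (by rw [← hn, Walk.length_cons]; omega) q hC₁D (by omega) rfl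
        have hlen := q.length_dropUntil_le_length hq
        exact q.support_dropUntil_subset_support hq
          (ih _ (by rw [← hn, Walk.length_cons]; omega) (q.dropUntil C hq) hne hle rfl)

theorem eq_toCluster_self_of_clusterLayer_eq_zero (hconn : G.Connected) {C : Cluster G s}
    (h : clusterLayer G s C = 0) : C = toCluster G s s := by
  obtain ⟨v, rfl⟩ := exists_toCluster_eq C
  rw [(hconn s v).dist_eq_zero_iff.mp h]

theorem exists_walk_length_eq_clusterLayer (hconn : G.Connected) (C : Cluster G s) :
    ∃ p : (clusterGraph G s).Walk (toCluster G s s) C, p.length = clusterLayer G s C := by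
  obtain ⟨n, hn⟩ : ∃ n, clusterLayer G s C = n := ⟨_, rfl⟩
  induction n generalizing C with
  | zero => exact ⟨Walk.nil.copy rfl (eq_toCluster_self_of_clusterLayer_eq_zero hconn hn).symm,
      by simp [hn]⟩
  | succ n ih =>
    have hpar := clusterLayer_parentCluster (C := C) (by omega)
    obtain ⟨p, hp⟩ := ih (parentCluster G s C) (by omega)
    exact ⟨p.concat (clusterGraph_adj_parentCluster (by omega)).symm, by
      rw [Walk.length_concat, hp]
      omega⟩

theorem dist_toCluster_self (hconn : G.Connected) (C : Cluster G s) :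
    (clusterGraph G s).dist (toCluster G s s) C = clusterLayer G s C := by
  obtain ⟨p, hp⟩ := exists_walk_length_eq_clusterLayer hconn C
  refine le_antisymm (hp ▸ dist_le p) ?_
  obtain ⟨q, hq⟩ := Reachable.exists_walk_length_eq_dist ⟨p⟩
  simpa [hq] using clusterLayer_le_add_length q

theorem IsSubtree.exists_walk {T : Set (Cluster G s)} (hT : IsSubtree G s T) {C D : Cluster G s}
    (hC : C ∈ T) (hD : D ∈ T) :
    ∃ p : (clusterGraph G s).Walk C D, ∀ X ∈ p.support, X ∈ T := by
  obtain ⟨q⟩ := hT.preconnected ⟨C, hC⟩ ⟨D, hD⟩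
  have hq : ∀ X ∈ (q.map (Embedding.induce T).toHom).support, X ∈ T := by
    simp only [Walk.support_map, List.mem_map]
    rintro _ ⟨Y, -, rfl⟩
    exact Y.2
  exact ⟨_, hq⟩

theorem exists_walk_support_map_eq_of_isChain {v : V} {l : List (Cluster G s)}
    (hl : (toCluster G s v :: l).IsChain
      fun C D => clusterLayer G s C ≠ 0 ∧ parentCluster G s C = D) :
    ∃ (b : V) (w : G.Walk v b), w.support.map (toCluster G s) = toCluster G s v :: l := by
  induction l generalizing v with
  | nil => exact ⟨v, Walk.nil, rfl⟩
  | cons D l ih =>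
    rw [List.isChain_cons_cons] at hl
    obtain ⟨⟨hv, rfl⟩, hl⟩ := hl
    obtain ⟨u, hadj, -, hu⟩ := exists_adj_toCluster_eq_parentCluster hv
    obtain ⟨b, w, hw⟩ := ih (hu ▸ hl)
    exact ⟨b, Walk.cons hadj w, by rw [Walk.support_cons, List.map_cons, hw, hu]⟩

theorem exists_walk_support_map_eq {l : List (Cluster G s)} (hne : l ≠ [])
    (hl : l.IsChain fun C D => clusterLayer G s C ≠ 0 ∧ parentCluster G s C = D) :
    ∃ (a b : V) (w : G.Walk a b), w.support.map (toCluster G s) = l := by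
  obtain ⟨C, l, rfl⟩ := List.exists_cons_of_ne_nil hne
  obtain ⟨v, rfl⟩ := exists_toCluster_eq C
  exact ⟨v, exists_walk_support_map_eq_of_isChain hl⟩

end LayeringPartition

namespace IsRootOf

variable {G : SimpleGraph V} {s : V} {T : Set (Cluster G s)} {R C : Cluster G s}

theorem clusterLayer_le (hconn : G.Connected) (hR : IsRootOf G s T R) (hC : C ∈ T) :
    clusterLayer G s R ≤ clusterLayer G s C := by
  simpa only [dist_toCluster_self hconn] using hR.2 C hC

theorem clusterLayer_ne_zero (hconn : G.Connected) (hR : IsRootOf G s T R) (hC : C ∈ T)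
    (hne : C ≠ R) : clusterLayer G s C ≠ 0 := fun h0 =>
  hne <| (eq_toCluster_self_of_clusterLayer_eq_zero hconn h0).trans
    (eq_toCluster_self_of_clusterLayer_eq_zero hconn (by
      have := hR.clusterLayer_le hconn hC
      omega)).symm

theorem parentCluster_mem (hconn : G.Connected) (hR : IsRootOf G s T R) (hT : IsSubtree G s T)
    (hC : C ∈ T) (hne : C ≠ R) :
    parentCluster G s C ∈ T ∧ clusterLayer G s (parentCluster G s C) < clusterLayer G s C := by
  obtain ⟨p, hp⟩ := hT.exists_walk hC hR.1
  have := clusterLayer_parentCluster (hR.clusterLayer_ne_zero hconn hC hne)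
  exact ⟨hp _ (parentCluster_mem_support p hne (hR.clusterLayer_le hconn hC)), by omega⟩

theorem clusterDegree_eq_one_iff (hconn : G.Connected) (hR : IsRootOf G s T R)
    (hT : IsSubtree G s T) (hC : C ∈ T) (hne : C ≠ R) :
    clusterDegree G s T C = 1 ↔ ∀ D ∈ T, D ≠ R → parentCluster G s D ≠ C := by
  have hC0 := hR.clusterLayer_ne_zero hconn hC hne
  have hpC := clusterLayer_parentCluster hC0
  have hp : parentCluster G s C ∈ {D | D ∈ T ∧ (clusterGraph G s).Adj C D} :=
    ⟨(hR.parentCluster_mem hconn hT hC hne).1, clusterGraph_adj_parentCluster hC0⟩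
  rw [clusterDegree, Set.ncard_eq_one]
  constructor
  · rintro ⟨E, hE⟩ D hD hDR rfl
    have hD0 := hR.clusterLayer_ne_zero hconn hD hDR
    have hDmem : D ∈ {D' | D' ∈ T ∧ (clusterGraph G s).Adj (parentCluster G s D) D'} :=
      ⟨hD, (clusterGraph_adj_parentCluster hD0).symm⟩
    rw [hE] at hp hDmem
    have hDD : D = parentCluster G s (parentCluster G s D) := hDmem.trans hp.symm
    have := clusterLayer_parentCluster hD0
    rw [← hDD] at hpC
    omega
  · intro hleaf
    refine ⟨_, Set.eq_singleton_iff_unique_mem.mpr ⟨hp, fun D ⟨hD, hadj⟩ => ?_⟩⟩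
    rcases clusterLayer_eq_add_one_of_adj hadj with hdown | hup
    · exact eq_parentCluster_of_adj hadj hdown
    · have hDR : D ≠ R := by
        rintro rfl
        have := hR.clusterLayer_le hconn hC
        omega
      exact absurd (eq_parentCluster_of_adj hadj.symm hup).symm (hleaf D hD hDR)

theorem numLeaves_eq_ncard_childless (hconn : G.Connected) (hR : IsRootOf G s T R)
    (hT : IsSubtree G s T) (hcard : 1 < T.ncard) :
    numLeaves G s T R = (childless (parentCluster G s) R T).ncard := by
  obtain ⟨D, hD, hDR⟩ := Set.exists_ne_of_one_lt_ncard hcard R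
  have hroot := root_notMem_childless (parentCluster G s) R (clusterLayer G s)
    (Set.finite_of_ncard_pos (by omega)) (fun _ hC hne => hR.parentCluster_mem hconn hT hC hne)
    ⟨D, hD, hDR⟩
  unfold numLeaves
  congr 1
  ext C
  constructor
  · rintro ⟨hC, hne, hdeg⟩
    exact ⟨hC, (hR.clusterDegree_eq_one_iff hconn hT hC hne).mp hdeg⟩
  · rintro ⟨hC, hleaf⟩
    have hne : C ≠ R := by
      rintro rfl
      exact hroot ⟨hC, hleaf⟩
    exact ⟨hC, hne, (hR.clusterDegree_eq_one_iff hconn hT hC hne).mpr hleaf⟩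

end IsRootOf

theorem exists_path_family_for_subtree_general
    {V : Type} (G : SimpleGraph V) (hconn : G.Connected)
    (s : V) (Tδ : Set (Cluster G s)) (hsub : IsSubtree G s Tδ)
    (hcard : 1 < Tδ.ncard)
    (R : Cluster G s) (hR : IsRootOf G s Tδ R) :
    ∃ (k : ℕ) (P : Fin k → Set V),
      k = numLeaves G s Tδ R ∧
      (∀ i : Fin k, ∃ (a b : V) (w : G.Walk a b), w.IsPath ∧
        P i = {x : V | x ∈ w.support}) ∧
      (∀ C ∈ Tδ, ∃! i : Fin k, ∃ v ∈ P i, toCluster G s v = C) ∧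
      (∀ C ∈ Tδ, ∀ i : Fin k, (∃ v ∈ P i, toCluster G s v = C) →
        (P i ∩ {v : V | toCluster G s v = C}).ncard = 1) ∧
      (∀ i j : Fin k, i ≠ j → Disjoint (P i) (P j)) ∧
      (∑ i : Fin k, (P i).ncard) = Tδ.ncard := by
  obtain ⟨k, c, hk, hc⟩ := exists_isChainDecomposition (parentCluster G s) R (clusterLayer G s)
    (Set.finite_of_ncard_pos (by omega)) hR.1 fun _ hC hne => hR.parentCluster_mem hconn hsub hC hne
  have hwalk (i : Fin k) : ∃ (a b : V) (w : G.Walk a b), w.support.map (toCluster G s) = c i :=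
    exists_walk_support_map_eq (hc.ne_nil i) <| (hc.isChain i).imp_of_mem_imp
      fun C _ hC _ ⟨hne, hCD⟩ => ⟨hR.clusterLayer_ne_zero hconn (hc.subset i C hC) hne, hCD⟩
  choose a b w hw using hwalk
  have hP : IsListPartition Tδ fun i => (w i).support.map (toCluster G s) := by
    simpa only [hw] using hc.toIsListPartition
  refine ⟨k, fun i => {x | x ∈ (w i).support},
    hk.trans (hR.numLeaves_eq_ncard_childless hconn hsub hcard).symm,
    fun i => ⟨a i, b i, w i, (Walk.isPath_def _).mpr (hP.nodup_of_map i), rfl⟩,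
    hP.existsUnique_exists_mem_map, fun _ _ _ => hP.ncard_inter_fiber_eq_one,
    fun _ _ => hP.disjoint_of_map, hP.sum_ncard_eq_of_map⟩

/-- For a subtree `T_δ` (with at least two clusters) of the layering
partition 𝒯, rooted consistently with 𝒯 at `R`, there is a family of `λ` paths of `G`
(`λ` = number of leaves of `T_δ` distinct from its root) such that every cluster of
`T_δ` is intersected by exactly one path, sharing exactly one vertex with it; in
particular the paths are pairwise vertex-disjoint and the total number of vertices on
all the paths equals the number of clusters of `T_δ`. -/
theorem exists_path_family_for_subtree
    {V : Type} [Fintype V] (G : SimpleGraph V) (hconn : G.Connected)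
    (s : V) (Tδ : Set (Cluster G s)) (hsub : IsSubtree G s Tδ)
    (hcard : 1 < Tδ.ncard)
    (R : Cluster G s) (hR : IsRootOf G s Tδ R) :
    ∃ (k : ℕ) (P : Fin k → Set V),
      k = numLeaves G s Tδ R ∧
      (∀ i : Fin k, ∃ (a b : V) (w : G.Walk a b), w.IsPath ∧
        P i = {x : V | x ∈ w.support}) ∧
      (∀ C ∈ Tδ, ∃! i : Fin k, ∃ v ∈ P i, toCluster G s v = C) ∧
      (∀ C ∈ Tδ, ∀ i : Fin k, (∃ v ∈ P i, toCluster G s v = C) →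
        (P i ∩ {v : V | toCluster G s v = C}).ncard = 1) ∧
      (∀ i j : Fin k, i ≠ j → Disjoint (P i) (P j)) ∧
      (∑ i : Fin k, (P i).ncard) = Tδ.ncard :=
  exists_path_family_for_subtree_general G hconn s Tδ hsub hcard R hR
end

section
/- Let 𝒯 be a tree-decomposition of a finite connected graph G, r : V → ℕ, B a bag of 𝒯, and let T_B be an r-covering subtree of 𝒯 that contains B and has the minimum number of bags among all such subtrees. If T_B has at least two bags, then for each leaf B' ≠ B of T_B there is a vertex v of G such that B' is the only bag of T_B with d_G(v, B') ≤ r(v). -/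
/-!
Deleting a leaf `B'` from `T_B` leaves a subtree that still contains `B` and has fewer bags,
so by minimality it is not `r`-covering. A vertex it fails to cover is still covered by
`T_B`, hence only by the bag `B'`.
-/

open SimpleGraph

/-- A tree-decomposition of the graph `G`, with bags indexed by `ι`:
a tree on `ι` together with a bag `bag i ⊆ V` for each node such that every vertex
lies in some bag, every edge of `G` has both endpoints in a common bag, and for each
vertex the bags containing it induce a subtree. -/
structure TreeDecomp {V : Type} (G : SimpleGraph V) (ι : Type) where
  tree : SimpleGraph ι
  isTree : tree.IsTree
  bag : ι → Set V
  covers_vertex : ∀ v : V, ∃ i : ι, v ∈ bag i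
  covers_edge : ∀ ⦃u v : V⦄, G.Adj u v → ∃ i : ι, u ∈ bag i ∧ v ∈ bag i
  bags_connected : ∀ v : V, (tree.induce {i : ι | v ∈ bag i}).Connected

variable {V ι : Type}

/-- The tree-decomposition has breadth `ρ`: each bag is contained in the
`ρ`-neighbourhood of some vertex of `G`. -/
def TreeDecomp.HasBreadth {G : SimpleGraph V} (TD : TreeDecomp G ι) (ρ : ℕ) : Prop :=
  ∀ i : ι, ∃ c : V, ∀ u ∈ TD.bag i, G.dist u c ≤ ρ

/-- The tree-decomposition has length `lam`: any two vertices of a common bag are at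
distance at most `lam` in `G`. -/
def TreeDecomp.HasLength {G : SimpleGraph V} (TD : TreeDecomp G ι) (lam : ℕ) : Prop :=
  ∀ i : ι, ∀ u ∈ TD.bag i, ∀ v ∈ TD.bag i, G.dist u v ≤ lam

/-- `G` admits a (finite) tree-decomposition of length `lam`. -/
def HasTDOfLength (G : SimpleGraph V) (lam : ℕ) : Prop :=
  ∃ (ι : Type) (_ : Fintype ι) (TD : TreeDecomp G ι), TD.HasLength lam

/-- The tree-length of `G` equals `lam`: `lam` is the minimum length over all
tree-decompositions of `G`. -/
def TreeLengthEq (G : SimpleGraph V) (lam : ℕ) : Prop :=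
  HasTDOfLength G lam ∧ ∀ lam' : ℕ, HasTDOfLength G lam' → lam ≤ lam'

/-- `T'` is an `(r+φ)`-covering subtree of the tree-decomposition `TD`: a connected
set of bags such that every vertex `v` of `G` is within distance `r v + φ` of some
bag of `T'`. -/
def IsCovSubtree {G : SimpleGraph V} (TD : TreeDecomp G ι) (r : V → ℕ) (φ : ℕ)
    (T' : Set ι) : Prop :=
  (TD.tree.induce T').Connected ∧
    ∀ v : V, ∃ i ∈ T', ∃ u ∈ TD.bag i, G.dist v u ≤ r v + φ

/-- The degree of the bag `i` inside the subtree `T'` of the decomposition tree. -/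
noncomputable def bagDegree {G : SimpleGraph V} (TD : TreeDecomp G ι)
    (T' : Set ι) (i : ι) : ℕ :=
  {j : ι | j ∈ T' ∧ TD.tree.Adj i j}.ncard

namespace SimpleGraph

variable {W : Type*} {G : SimpleGraph W} {S : Set W} {x : W}

lemma Preconnected.induce_diff_singleton_of_subsingleton (hS : (G.induce S).Preconnected)
    (hx : {j | j ∈ S ∧ G.Adj x j}.Subsingleton) : (G.induce (S \ {x})).Preconnected := by
  have hleaf : ∀ y ∉ {y : S | (y : W) ≠ x}, ((G.induce S).neighborSet y).Subsingleton := by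
    rintro ⟨y, hyS⟩ hy a ha b hb
    obtain rfl : y = x := not_not.mp hy
    exact Subtype.ext (hx ⟨a.2, ha⟩ ⟨b.2, hb⟩)
  let φ : (G.induce S).induce {y : S | (y : W) ≠ x} →g G.induce (S \ {x}) :=
    induceHom (Embedding.induce S).toHom fun y hy => ⟨y.2, hy⟩
  have hφ : Function.Surjective φ := fun ⟨y, hyS, hyx⟩ => ⟨⟨⟨y, hyS⟩, hyx⟩, rfl⟩
  exact (hS.induce_of_degree_eq_one hleaf).map φ hφ

end SimpleGraph

variable {G : SimpleGraph V}

lemma IsCovSubtree.exists_private_vertex {TD : TreeDecomp G ι} {r : V → ℕ} {φ : ℕ}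
    {T : Set ι} {i : ι} (hT : IsCovSubtree TD r φ T)
    (hconn : (TD.tree.induce (T \ {i})).Connected) (hnot : ¬ IsCovSubtree TD r φ (T \ {i})) :
    ∃ v : V, (∃ u ∈ TD.bag i, G.dist v u ≤ r v + φ) ∧
      ∀ j ∈ T, (∃ u ∈ TD.bag j, G.dist v u ≤ r v + φ) → j = i := by
  obtain ⟨v, hv⟩ : ∃ v : V, ∀ j ∈ T \ {i}, ¬ ∃ u ∈ TD.bag j, G.dist v u ≤ r v + φ := by
    simpa [IsCovSubtree, hconn] using hnot
  have hprivate : ∀ j ∈ T, (∃ u ∈ TD.bag j, G.dist v u ≤ r v + φ) → j = i :=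
    fun j hj hjv => by_contra fun hji => hv j ⟨hj, hji⟩ hjv
  obtain ⟨j, hj, hjv⟩ := hT.2 v
  exact ⟨v, hprivate j hj hjv ▸ hjv, hprivate⟩

theorem leaf_of_min_covering_subtree_private_vertex_general
    {V ι : Type} [Fintype ι]
    (G : SimpleGraph V) (TD : TreeDecomp G ι)
    (r : V → ℕ) (B : ι) (TB : Set ι)
    (hTB : IsCovSubtree TD r 0 TB) (hBmem : B ∈ TB)
    (hmin : ∀ T'' : Set ι, IsCovSubtree TD r 0 T'' → B ∈ T'' → TB.ncard ≤ T''.ncard) :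
    ∀ B' ∈ TB, B' ≠ B → bagDegree TD TB B' = 1 →
      ∃ v : V, (∃ u ∈ TD.bag B', G.dist v u ≤ r v) ∧
        ∀ j ∈ TB, (∃ u ∈ TD.bag j, G.dist v u ≤ r v) → j = B' := by
  intro B' hB' hne hdeg
  have hB : B ∈ TB \ {B'} := ⟨hBmem, hne.symm⟩
  have hconn : (TD.tree.induce (TB \ {B'})).Connected :=
    connected_iff _ |>.mpr ⟨hTB.1.preconnected.induce_diff_singleton_of_subsingleton
      (Set.ncard_le_one_iff_subsingleton.mp hdeg.le), ⟨⟨B, hB⟩⟩⟩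
  have hnot : ¬ IsCovSubtree TD r 0 (TB \ {B'}) := fun hcov =>
    (hmin _ hcov hB).not_gt (Set.ncard_sdiff_singleton_lt_of_mem hB')
  exact hTB.exists_private_vertex hconn hnot

/-- Let `T_B` be an `r`-covering subtree of a tree-decomposition of
`G` containing the bag `B` and with the fewest bags among all such subtrees, and
suppose `T_B` has at least two bags.  Then for each leaf `B' ≠ B` of `T_B` there is a
vertex `v` such that `B'` is the only bag of `T_B` with `d_G(v, B') ≤ r(v)`. -/
theorem leaf_of_min_covering_subtree_private_vertex
    {V ι : Type} [Fintype V] [Fintype ι]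
    (G : SimpleGraph V) (hconn : G.Connected) (TD : TreeDecomp G ι)
    (r : V → ℕ) (B : ι) (TB : Set ι)
    (hTB : IsCovSubtree TD r 0 TB) (hBmem : B ∈ TB)
    (hmin : ∀ T'' : Set ι, IsCovSubtree TD r 0 T'' → B ∈ T'' → TB.ncard ≤ T''.ncard)
    (hcard : 1 < TB.ncard) :
    ∀ B' ∈ TB, B' ≠ B → bagDegree TD TB B' = 1 →
      ∃ v : V, (∃ u ∈ TD.bag B', G.dist v u ≤ r v) ∧
        ∀ j ∈ TB, (∃ u ∈ TD.bag j, G.dist v u ≤ r v) → j = B' :=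
  leaf_of_min_covering_subtree_private_vertex_general G TD r B TB hTB hBmem hmin
end
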